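/- Let V be a word consisting of j North steps and j South steps, and let H be a word consisting of i East steps and i West steps (so both projections are loops). Then the number of shuffles of V and H with even peak-count exceeds the number with odd peak-count by exactly C(i+j, i). Equivalently, the polynomial counting shuffles of V and H according to peak-count takes the value C(i+j, i) when evaluated at −1. -/
import Mathlib


inductive Step : Type
  | E | W | N | S
deriving DecidableEq, Repr

open Step

/-- A step is vertical (North or South). -/
def isVert : Step → Bool
  | N => true
  | S => true
  | _ => false

/-- A step is horizontal (East or West). -/
def isHoriz : Step → Bool
  | E => true
  | W => true
  | _ => false

/-- `σ` is a shuffle (interleaving) of the vertical path `V` and horizontal path `H`: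
its subsequence of vertical steps is `V` and its subsequence of horizontal steps is `H`. -/
def IsShuffle (V H σ : List Step) : Prop :=
  σ.filter isVert = V ∧ σ.filter isHoriz = H

/-- The list of adjacent pairs `(σ_i, σ_{i+1})` of a list. -/
def pairs (σ : List Step) : List (Step × Step) := σ.zip σ.tail

/-- Signed peak-count: (# of (N,W) adjacent pairs) − (# of (E,S) adjacent pairs). -/
def signedPeak (σ : List Step) : ℤ :=
  (((pairs σ).filter (fun p => decide (p.1 = N ∧ p.2 = W))).length : ℤ)
  - (((pairs σ).filter (fun p => decide (p.1 = E ∧ p.2 = S))).length : ℤ)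

/-- Peak-count: (# of (N,W) adjacent pairs) + (# of (E,S) adjacent pairs). -/
def peakCount (σ : List Step) : ℕ :=
  ((pairs σ).filter (fun p => decide (p.1 = N ∧ p.2 = W))).length
  + ((pairs σ).filter (fun p => decide (p.1 = E ∧ p.2 = S))).length

/-- Binomial coefficient with integer arguments, equal to 0 unless `0 ≤ b ≤ a`. -/
def zch (a b : ℤ) : ℕ := if 0 ≤ b ∧ b ≤ a then a.toNat.choose b.toNat else 0

-- ## step facts
lemma vert_cases {s : Step} (h : isVert s = true) : s = N ∨ s = S := by
  cases s <;> simp_all [isVert]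
lemma horiz_cases {s : Step} (h : isHoriz s = true) : s = E ∨ s = W := by
  cases s <;> simp_all [isHoriz]
lemma vert_not_horiz {s : Step} (h : isVert s = true) : isHoriz s = false := by
  cases s <;> simp_all [isVert, isHoriz]
lemma horiz_not_vert {s : Step} (h : isHoriz s = true) : isVert s = false := by
  cases s <;> simp_all [isVert, isHoriz]
lemma vert_of_not_horiz {s : Step} (h : isHoriz s = false) : isVert s = true := by
  cases s <;> simp_all [isVert, isHoriz]
lemma horiz_of_not_vert {s : Step} (h : isVert s = false) : isHoriz s = true := by
  cases s <;> simp_all [isVert, isHoriz]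

-- ## peak counting
def pkInd (x y : Step) : ℕ := if (x = N ∧ y = W) ∨ (x = E ∧ y = S) then 1 else 0

lemma peakCount_nil : peakCount [] = 0 := rfl
lemma peakCount_single (x : Step) : peakCount [x] = 0 := rfl

lemma peakCount_cons (x y : Step) (τ : List Step) :
    peakCount (x::y::τ) = pkInd x y + peakCount (y::τ) := by
  have h : pairs (x::y::τ) = (x,y) :: pairs (y::τ) := rfl
  unfold peakCount pkInd
  rw [h, List.filter_cons, List.filter_cons]
  cases x <;> cases y <;> simp <;> omega

def sgn (σ : List Step) : ℤ := (-1)^(peakCount σ)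
def wInd (σ : List Step) : ℤ := if σ.head? = some W then sgn σ else 0
def sInd (σ : List Step) : ℤ := if σ.head? = some S then sgn σ else 0

lemma sgn_cons_S (σ : List Step) : sgn (S::σ) = sgn σ := by
  cases σ with
  | nil => rfl
  | cons y τ =>
    rw [sgn, sgn, peakCount_cons]
    have : pkInd S y = 0 := by cases y <;> rfl
    rw [this, Nat.zero_add]

lemma sgn_cons_W (σ : List Step) : sgn (W::σ) = sgn σ := by
  cases σ with
  | nil => rfl
  | cons y τ =>
    rw [sgn, sgn, peakCount_cons]
    have : pkInd W y = 0 := by cases y <;> rfl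
    rw [this, Nat.zero_add]

lemma sgn_cons_N (σ : List Step) : sgn (N::σ) = sgn σ - 2 * wInd σ := by
  cases σ with
  | nil => rfl
  | cons y τ =>
    rw [sgn, sgn, peakCount_cons]
    cases y <;> simp [pkInd, wInd, sgn, pow_succ] <;> ring

lemma sgn_cons_E (σ : List Step) : sgn (E::σ) = sgn σ - 2 * sInd σ := by
  cases σ with
  | nil => rfl
  | cons y τ =>
    rw [sgn, sgn, peakCount_cons]
    cases y <;> simp [pkInd, sInd, sgn, pow_succ] <;> ring

lemma peak_vert : ∀ (V : List Step), (∀ s ∈ V, isVert s = true) → peakCount V = 0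
  | [], _ => rfl
  | [x], _ => rfl
  | x :: y :: τ, h => by
    rw [peakCount_cons]
    have hx := vert_cases (h x (by simp))
    have hy := vert_cases (h y (by simp))
    have h0 : pkInd x y = 0 := by rcases hx with rfl | rfl <;> rcases hy with rfl | rfl <;> rfl
    rw [h0, Nat.zero_add]
    exact peak_vert (y::τ) (fun s hs => h s (by simp at hs ⊢; tauto))

lemma peak_horiz : ∀ (H : List Step), (∀ s ∈ H, isHoriz s = true) → peakCount H = 0
  | [], _ => rfl
  | [x], _ => rfl
  | x :: y :: τ, h => by
    rw [peakCount_cons]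
    have hx := horiz_cases (h x (by simp))
    have hy := horiz_cases (h y (by simp))
    have h0 : pkInd x y = 0 := by rcases hx with rfl | rfl <;> rcases hy with rfl | rfl <;> rfl
    rw [h0, Nat.zero_add]
    exact peak_horiz (y::τ) (fun s hs => h s (by simp at hs ⊢; tauto))

-- ## shuffles
def shuffles : List Step → List Step → List (List Step)
  | [], H => [H]
  | v::V, [] => [v::V]
  | v::V, h::H =>
      ((shuffles V (h::H)).map (fun σ => v :: σ)) ++
      ((shuffles (v::V) H).map (fun σ => h :: σ))
termination_by V H => V.length + H.length
decreasing_by all_goals (simp [List.length_cons]; try omega)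

lemma shuffles_nil_left (H : List Step) : shuffles [] H = [H] := by
  simp [shuffles]

lemma shuffles_nil_right (V : List Step) : shuffles V [] = [V] := by
  cases V <;> simp [shuffles]

lemma shuffles_cons_cons (v h : Step) (V H : List Step) :
    shuffles (v::V) (h::H) =
      ((shuffles V (h::H)).map (fun σ => v :: σ)) ++
      ((shuffles (v::V) H).map (fun σ => h :: σ)) := by
  simp [shuffles]

-- ## signed sums
def fsum (L : List (List Step)) : ℤ := (L.map sgn).sum
def wsum (L : List (List Step)) : ℤ := (L.map wInd).sum
def ssum (L : List (List Step)) : ℤ := (L.map sInd).sum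

lemma fsum_cons (σ : List Step) (L) : fsum (σ :: L) = sgn σ + fsum L := by simp [fsum]
lemma fsum_append (L M) : fsum (L ++ M) = fsum L + fsum M := by simp [fsum]
lemma wsum_append (L M) : wsum (L ++ M) = wsum L + wsum M := by simp [wsum]
lemma ssum_append (L M) : ssum (L ++ M) = ssum L + ssum M := by simp [ssum]

lemma fsum_map_cons_W : ∀ L, fsum (L.map (fun σ => W :: σ)) = fsum L
  | [] => rfl
  | σ :: L => by
    rw [List.map_cons, fsum_cons, fsum_cons, sgn_cons_W, fsum_map_cons_W L]

lemma fsum_map_cons_S : ∀ L, fsum (L.map (fun σ => S :: σ)) = fsum L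
  | [] => rfl
  | σ :: L => by
    rw [List.map_cons, fsum_cons, fsum_cons, sgn_cons_S, fsum_map_cons_S L]

lemma fsum_map_cons_N : ∀ L, fsum (L.map (fun σ => N :: σ)) = fsum L - 2 * wsum L
  | [] => by simp [fsum, wsum]
  | σ :: L => by
    rw [List.map_cons, fsum_cons, sgn_cons_N, fsum_map_cons_N L]
    simp [fsum, wsum]; ring

lemma fsum_map_cons_E : ∀ L, fsum (L.map (fun σ => E :: σ)) = fsum L - 2 * ssum L
  | [] => by simp [fsum, ssum]
  | σ :: L => by
    rw [List.map_cons, fsum_cons, sgn_cons_E, fsum_map_cons_E L]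
    simp [fsum, ssum]; ring

lemma wsum_map_cons {x : Step} (hx : x ≠ W) (L : List (List Step)) :
    wsum (L.map (fun σ => x :: σ)) = 0 := by
  induction L with
  | nil => rfl
  | cons σ L ih =>
    simp only [wsum, List.map_cons, List.sum_cons] at ih ⊢
    rw [show wInd (x :: σ) = 0 by simp [wInd, hx], ih, Int.add_zero]

lemma wsum_map_cons_W (L : List (List Step)) :
    wsum (L.map (fun σ => W :: σ)) = fsum L := by
  induction L with
  | nil => rfl
  | cons σ L ih =>
    simp only [wsum, fsum, List.map_cons, List.sum_cons] at ih ⊢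
    rw [show wInd (W :: σ) = sgn σ by simp [wInd, sgn_cons_W], ih]

lemma ssum_map_cons {x : Step} (hx : x ≠ S) (L : List (List Step)) :
    ssum (L.map (fun σ => x :: σ)) = 0 := by
  induction L with
  | nil => rfl
  | cons σ L ih =>
    simp only [ssum, List.map_cons, List.sum_cons] at ih ⊢
    rw [show sInd (x :: σ) = 0 by simp [sInd, hx], ih, Int.add_zero]

lemma ssum_map_cons_S (L : List (List Step)) :
    ssum (L.map (fun σ => S :: σ)) = fsum L := by
  induction L with
  | nil => rfl
  | cons σ L ih =>
    simp only [ssum, fsum, List.map_cons, List.sum_cons] at ih ⊢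
    rw [show sInd (S :: σ) = sgn σ by simp [sInd, sgn_cons_S], ih]

lemma wsum_shuffles_W (V H : List Step) (hV : ∀ s ∈ V, isVert s = true) :
    wsum (shuffles V (W::H)) = fsum (shuffles V H) := by
  cases V with
  | nil =>
    rw [shuffles_nil_left, shuffles_nil_left]
    simp [wsum, fsum, wInd, sgn_cons_W]
  | cons v V =>
    rw [shuffles_cons_cons, wsum_append]
    have hv : v ≠ W := by
      rcases vert_cases (hV v (by simp)) with rfl | rfl <;> simp
    rw [wsum_map_cons hv, wsum_map_cons_W, Int.zero_add]

lemma wsum_shuffles_E (V H : List Step) (hV : ∀ s ∈ V, isVert s = true) :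
    wsum (shuffles V (E::H)) = 0 := by
  cases V with
  | nil =>
    rw [shuffles_nil_left]
    simp [wsum, wInd]
  | cons v V =>
    rw [shuffles_cons_cons, wsum_append]
    have hv : v ≠ W := by
      rcases vert_cases (hV v (by simp)) with rfl | rfl <;> simp
    rw [wsum_map_cons hv, wsum_map_cons (by simp : (E:Step) ≠ W)]
    rfl

lemma ssum_shuffles_S (V H : List Step) (hH : ∀ s ∈ H, isHoriz s = true) :
    ssum (shuffles (S::V) H) = fsum (shuffles V H) := by
  cases H with
  | nil =>
    rw [shuffles_nil_right, shuffles_nil_right]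
    simp [ssum, fsum, sInd, sgn_cons_S]
  | cons h H =>
    rw [shuffles_cons_cons, ssum_append]
    have hh : h ≠ S := by
      rcases horiz_cases (hH h (by simp)) with rfl | rfl <;> simp
    rw [ssum_map_cons hh, ssum_map_cons_S, Int.add_zero]

lemma ssum_shuffles_N (V H : List Step) (hH : ∀ s ∈ H, isHoriz s = true) :
    ssum (shuffles (N::V) H) = 0 := by
  cases H with
  | nil =>
    rw [shuffles_nil_right]
    simp [ssum, sInd]
  | cons h H =>
    rw [shuffles_cons_cons, ssum_append]
    have hh : h ≠ S := by
      rcases horiz_cases (hH h (by simp)) with rfl | rfl <;> simp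
    rw [ssum_map_cons (by simp : (N:Step) ≠ S), ssum_map_cons hh]
    rfl
open Polynomial

noncomputable def PP (m n : ℕ) : Polynomial ℤ := (1 + X)^m * (1 - X)^n

lemma PP_succ_left (m n : ℕ) : PP (m+1) n = (1+X) * PP m n := by
  unfold PP; rw [pow_succ]; ring
lemma PP_succ_right (m n : ℕ) : PP m (n+1) = (1-X) * PP m n := by
  unfold PP; rw [pow_succ]; ring
lemma coeff_PP_zero (m n : ℕ) : (PP m n).coeff 0 = 1 := by
  rw [coeff_zero_eq_eval_zero]; simp [PP]
lemma coeff_PP_succ_left (m n k : ℕ) :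
    (PP (m+1) n).coeff (k+1) = (PP m n).coeff (k+1) + (PP m n).coeff k := by
  rw [PP_succ_left, add_mul, one_mul, coeff_add, coeff_X_mul]
lemma coeff_PP_succ_right (m n k : ℕ) :
    (PP m (n+1)).coeff (k+1) = (PP m n).coeff (k+1) - (PP m n).coeff k := by
  rw [PP_succ_right, sub_mul, one_mul, coeff_sub, coeff_X_mul]
lemma PP_harmonic (m n : ℕ) : PP (m+1) n + PP m (n+1) = 2 * PP m n := by
  rw [PP_succ_left, PP_succ_right]; ring

lemma natDegree_PP_le (m n : ℕ) : (PP m n).natDegree ≤ m + n := by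
  have h1 : ((1 + X : ℤ[X])^m).natDegree ≤ m := by
    refine natDegree_pow_le.trans ?_
    have : (1 + X : ℤ[X]).natDegree ≤ 1 := by
      refine (natDegree_add_le _ _).trans ?_
      simp
    calc m * (1+X : ℤ[X]).natDegree ≤ m * 1 := Nat.mul_le_mul_left _ this
      _ = m := Nat.mul_one m
  have h2 : ((1 - X : ℤ[X])^n).natDegree ≤ n := by
    refine natDegree_pow_le.trans ?_
    have : (1 - X : ℤ[X]).natDegree ≤ 1 := by
      refine (natDegree_sub_le _ _).trans ?_
      simp
    calc n * (1-X : ℤ[X]).natDegree ≤ n * 1 := Nat.mul_le_mul_left _ this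
      _ = n := Nat.mul_one n
  exact natDegree_mul_le.trans (Nat.add_le_add h1 h2)

lemma coeff_PP_vanish {m n k : ℕ} (h : m + n < k) : (PP m n).coeff k = 0 :=
  coeff_eq_zero_of_natDegree_lt (lt_of_le_of_lt (natDegree_PP_le m n) h)

lemma coeff_PP_top (m n : ℕ) : (PP m n).coeff (m+n) = (-1)^n := by
  induction m generalizing n with
  | zero =>
    induction n with
    | zero => simpa using coeff_PP_zero 0 0
    | succ n ih =>
      have h := coeff_PP_succ_right 0 n n
      have hv : (PP 0 n).coeff (n+1) = 0 := coeff_PP_vanish (by omega)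
      rw [Nat.zero_add] at ih ⊢
      rw [h, hv, ih]; ring
  | succ m ih =>
    have h := coeff_PP_succ_left m n (m+n)
    have hv : (PP m n).coeff (m+n+1) = 0 := coeff_PP_vanish (by omega)
    have : m + 1 + n = (m + n) + 1 := by omega
    rw [this, h, hv, ih]; ring

lemma PP_diag (n : ℕ) : PP n n = (1 - X^2)^n := by
  unfold PP; rw [← mul_pow]; ring_nf

lemma coeff_PP_diag (n j : ℕ) : (PP n n).coeff (2*j) = (-1)^j * (n.choose j : ℤ) := by
  rw [PP_diag]
  have hexp : ((1 : ℤ[X]) - X^2)^n = ∑ k ∈ Finset.range (n+1),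
      (C ((-1)^k * (n.choose k : ℤ))) * X^(2*k) := by
    have h1 : ((1 : ℤ[X]) - X^2) = (-X^2) + 1 := by ring
    rw [h1, add_pow]
    refine Finset.sum_congr rfl fun k _ => ?_
    have hC : (C ((-1)^k * (n.choose k : ℤ)) : ℤ[X])
        = (-1)^k * ((n.choose k : ℕ) : ℤ[X]) := by
      simp [C_mul, C_pow]
    rw [hC, one_pow, mul_one, neg_pow, ← pow_mul]
    ring
  rw [hexp, finset_sum_coeff, Finset.sum_eq_single j]
  · rw [coeff_C_mul, coeff_X_pow]; simp
  · intro k _ hk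
    rw [coeff_C_mul, coeff_X_pow]
    simp [show ¬ (2*j = 2*k) by omega]
  · intro hj
    have hn : n < j := by simp [Finset.mem_range] at hj; omega
    rw [coeff_C_mul, coeff_X_pow]
    simp [Nat.choose_eq_zero_of_lt hn]

noncomputable def Phi (a b c d : ℕ) : ℤ := (-1)^b * (PP (a+c) (b+d)).coeff (a+b)

lemma phi_base1 (c d : ℕ) : Phi 0 0 c d = 1 := by
  simp [Phi, coeff_PP_zero]

lemma phi_base2 (a b : ℕ) : Phi a b 0 0 = 1 := by
  unfold Phi
  rw [Nat.add_zero, Nat.add_zero, coeff_PP_top, ← pow_add]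
  exact Even.neg_one_pow ⟨b, rfl⟩

lemma coeff_PP_harm (m n k : ℕ) :
    (PP (m+1) n).coeff k + (PP m (n+1)).coeff k = 2 * (PP m n).coeff k := by
  have h := PP_harmonic m n
  have h2 : ((2 : ℤ[X]) * PP m n).coeff k = 2 * (PP m n).coeff k := by
    rw [show (2:ℤ[X]) = C 2 by simp, coeff_C_mul]
  rw [← coeff_add, h, h2]

lemma phi_NE (a b c d : ℕ) :
    Phi (a+1) b (c+1) d = Phi a b (c+1) d + Phi (a+1) b c d := by
  unfold Phi
  simp only [show a+1+(c+1) = (a+c+1)+1 from by omega,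
    show a+1+b = (a+b)+1 from by omega,
    show a+(c+1) = (a+c)+1 from by omega,
    show a+1+c = (a+c)+1 from by omega]
  rw [coeff_PP_succ_left]
  ring

lemma phi_NW (a b c d : ℕ) :
    Phi (a+1) b c (d+1) = Phi a b c (d+1) + Phi (a+1) b c d - 2 * Phi a b c d := by
  unfold Phi
  simp only [show a+1+c = (a+c)+1 from by omega,
    show b+(d+1) = (b+d)+1 from by omega,
    show a+1+b = (a+b)+1 from by omega]
  rw [coeff_PP_succ_left (a+c) (b+d+1) (a+b),
      coeff_PP_succ_right (a+c) (b+d) (a+b),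
      coeff_PP_succ_left (a+c) (b+d) (a+b)]
  ring

lemma phi_SE (a b c d : ℕ) :
    Phi a (b+1) (c+1) d = Phi a (b+1) c d + Phi a b (c+1) d - 2 * Phi a b c d := by
  unfold Phi
  simp only [show a+(c+1) = (a+c)+1 from by omega,
    show b+1+d = (b+d)+1 from by omega,
    show a+(b+1) = (a+b)+1 from by omega]
  have hh := coeff_PP_harm (a+c) (b+d) (a+b)
  rw [coeff_PP_succ_left (a+c) (b+d+1) (a+b)]
  rw [pow_succ]
  linear_combination -(-1:ℤ)^b * hh

lemma phi_SW (a b c d : ℕ) :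
    Phi a (b+1) c (d+1) = Phi a b c (d+1) + Phi a (b+1) c d := by
  unfold Phi
  simp only [show b+1+(d+1) = (b+d+1)+1 from by omega,
    show b+(d+1) = (b+d)+1 from by omega,
    show b+1+d = (b+d)+1 from by omega,
    show a+(b+1) = (a+b)+1 from by omega]
  rw [coeff_PP_succ_right (a+c) (b+d+1) (a+b), pow_succ]
  ring

lemma phi_diag (i j : ℕ) : Phi j j i i = ((i+j).choose i : ℤ) := by
  unfold Phi
  rw [show j+j = 2*j from by omega, show j+i = i+j from by omega, coeff_PP_diag,
      ← mul_assoc, ← pow_add]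
  rw [Even.neg_one_pow ⟨j, rfl⟩, one_mul, Nat.choose_symm_add]

lemma fsum_shuffles : ∀ (n : ℕ) (V H : List Step), V.length + H.length = n →
    (∀ s ∈ V, isVert s = true) → (∀ s ∈ H, isHoriz s = true) →
    fsum (shuffles V H) = Phi (V.count N) (V.count S) (H.count E) (H.count W) := by
  intro n
  induction n using Nat.strong_induction_on with
  | _ n ih =>
    intro V H hlen hV hH
    match V, H with
    | [], H =>
      rw [shuffles_nil_left]
      simp only [List.count_nil]
      rw [phi_base1]
      simp [fsum, sgn, peak_horiz H hH]
    | v::V, [] =>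
      rw [shuffles_nil_right]
      simp only [List.count_nil]
      rw [phi_base2]
      simp [fsum, sgn, peak_vert (v::V) hV]
    | v::V, h::H =>
      have hV' : ∀ s ∈ V, isVert s = true := fun s hs => hV s (by simp [hs])
      have hH' : ∀ s ∈ H, isHoriz s = true := fun s hs => hH s (by simp [hs])
      have ih1 : ∀ (h' : Step), isHoriz h' = true →
          fsum (shuffles V (h'::H)) = Phi (V.count N) (V.count S) ((h'::H).count E) ((h'::H).count W) := by
        intro h' hh'
        refine ih (V.length + (h'::H).length) (by simp at hlen ⊢; omega) V (h'::H) rfl hV' ?_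
        intro s hs
        rcases List.mem_cons.mp hs with rfl | hs
        · exact hh'
        · exact hH' s hs
      have ih2 : ∀ (v' : Step), isVert v' = true →
          fsum (shuffles (v'::V) H) = Phi ((v'::V).count N) ((v'::V).count S) (H.count E) (H.count W) := by
        intro v' hv'
        refine ih ((v'::V).length + H.length) (by simp at hlen ⊢; omega) (v'::V) H rfl ?_ hH'
        intro s hs
        rcases List.mem_cons.mp hs with rfl | hs
        · exact hv'
        · exact hV' s hs
      have ih0 : fsum (shuffles V H) = Phi (V.count N) (V.count S) (H.count E) (H.count W) :=
        ih (V.length + H.length) (by simp at hlen ⊢; omega) V H rfl hV' hH'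
      rw [shuffles_cons_cons, fsum_append]
      rcases vert_cases (hV v (by simp)) with rfl | rfl <;>
        rcases horiz_cases (hH h (by simp)) with rfl | rfl
      · -- v = N, h = E
        rw [fsum_map_cons_N, fsum_map_cons_E, wsum_shuffles_E V H hV',
            ssum_shuffles_N V H hH', ih1 E rfl, ih2 N rfl]
        simp [List.count_cons]
        rw [phi_NE]
        try ring
      · -- v = N, h = W
        rw [fsum_map_cons_N, fsum_map_cons_W, wsum_shuffles_W V H hV',
            ih1 W rfl, ih2 N rfl, ih0]
        simp [List.count_cons]
        rw [phi_NW]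
        try ring
      · -- v = S, h = E
        rw [fsum_map_cons_S, fsum_map_cons_E, ssum_shuffles_S V H hH',
            ih1 E rfl, ih2 S rfl, ih0]
        simp [List.count_cons]
        rw [phi_SE]
        try ring
      · -- v = S, h = W
        rw [fsum_map_cons_S, fsum_map_cons_W, ih1 W rfl, ih2 S rfl]
        simp [List.count_cons]
        rw [phi_SW]
        try ring

lemma filter_horiz_of_no_vert {τ : List Step} (h : τ.filter isVert = []) :
    τ.filter isHoriz = τ := by
  apply List.filter_eq_self.mpr
  intro s hs
  have : isVert s = false := by
    by_contra hc
    have hv : isVert s = true := by simpa using hc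
    have : s ∈ τ.filter isVert := List.mem_filter.mpr ⟨hs, hv⟩
    simp [h] at this
  exact horiz_of_not_vert this

lemma filter_vert_of_no_horiz {τ : List Step} (h : τ.filter isHoriz = []) :
    τ.filter isVert = τ := by
  apply List.filter_eq_self.mpr
  intro s hs
  have : isHoriz s = false := by
    by_contra hc
    have hv : isHoriz s = true := by simpa using hc
    have : s ∈ τ.filter isHoriz := List.mem_filter.mpr ⟨hs, hv⟩
    simp [h] at this
  exact vert_of_not_horiz this

lemma mem_of_isShuffle : ∀ (σ V H : List Step), IsShuffle V H σ → σ ∈ shuffles V H := by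
  intro σ
  induction σ with
  | nil =>
    intro V H ⟨h1, h2⟩
    simp at h1 h2
    subst h1; subst h2
    simp [shuffles_nil_left]
  | cons s τ ihτ =>
    intro V H ⟨h1, h2⟩
    cases hs : isVert s with
    | true =>
      have hsh : isHoriz s = false := vert_not_horiz hs
      rw [List.filter_cons, hs] at h1
      rw [List.filter_cons, hsh] at h2
      simp at h1 h2
      subst h1
      cases H with
      | nil =>
        have := filter_vert_of_no_horiz h2
        rw [this, shuffles_nil_right]
        simp
      | cons h' H' =>
        rw [shuffles_cons_cons]
        refine List.mem_append_left _ ?_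
        refine List.mem_map.mpr ⟨τ, ?_, rfl⟩
        exact ihτ _ _ ⟨rfl, h2⟩
    | false =>
      have hsh : isHoriz s = true := horiz_of_not_vert hs
      rw [List.filter_cons, hs] at h1
      rw [List.filter_cons, hsh] at h2
      simp at h1 h2
      subst h2
      cases V with
      | nil =>
        have := filter_horiz_of_no_vert h1
        rw [this, shuffles_nil_left]
        simp
      | cons v' V' =>
        rw [shuffles_cons_cons]
        refine List.mem_append_right _ ?_
        refine List.mem_map.mpr ⟨τ, ?_, rfl⟩
        exact ihτ _ _ ⟨h1, rfl⟩

lemma isShuffle_of_mem : ∀ (n : ℕ) (V H σ : List Step), V.length + H.length = n →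
    (∀ s ∈ V, isVert s = true) → (∀ s ∈ H, isHoriz s = true) →
    σ ∈ shuffles V H → IsShuffle V H σ := by
  intro n
  induction n using Nat.strong_induction_on with
  | _ n ih =>
    intro V H σ hlen hV hH hmem
    match V, H with
    | [], H =>
      rw [shuffles_nil_left] at hmem
      simp at hmem
      subst hmem
      constructor
      · exact List.filter_eq_nil_iff.mpr (fun s hs => by simp [horiz_not_vert (hH s hs)])
      · exact List.filter_eq_self.mpr hH
    | v::V, [] =>
      rw [shuffles_nil_right] at hmem
      simp at hmem
      subst hmem
      constructor
      · exact List.filter_eq_self.mpr hV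
      · exact List.filter_eq_nil_iff.mpr (fun s hs => by simp [vert_not_horiz (hV s hs)])
    | v::V, h::H =>
      have hV' : ∀ s ∈ V, isVert s = true := fun s hs => hV s (by simp [hs])
      have hH' : ∀ s ∈ H, isHoriz s = true := fun s hs => hH s (by simp [hs])
      have hv : isVert v = true := hV v (by simp)
      have hh : isHoriz h = true := hH h (by simp)
      rw [shuffles_cons_cons] at hmem
      rcases List.mem_append.mp hmem with hm | hm
      · obtain ⟨τ, hτ, rfl⟩ := List.mem_map.mp hm
        obtain ⟨k1, k2⟩ := ih (V.length + (h::H).length) (by simp at hlen ⊢; omega)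
          V (h::H) τ rfl hV' hH hτ
        constructor
        · rw [List.filter_cons, hv]; simp [k1]
        · rw [List.filter_cons, vert_not_horiz hv]; simp [k2]
      · obtain ⟨τ, hτ, rfl⟩ := List.mem_map.mp hm
        obtain ⟨k1, k2⟩ := ih ((v::V).length + H.length) (by simp at hlen ⊢; omega)
          (v::V) H τ rfl hV hH' hτ
        constructor
        · rw [List.filter_cons, horiz_not_vert hh]; simp [k1]
        · rw [List.filter_cons, hh]; simp [k2]

lemma shuffles_nodup : ∀ (n : ℕ) (V H : List Step), V.length + H.length = n →
    (∀ s ∈ V, isVert s = true) → (∀ s ∈ H, isHoriz s = true) →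
    (shuffles V H).Nodup := by
  intro n
  induction n using Nat.strong_induction_on with
  | _ n ih =>
    intro V H hlen hV hH
    match V, H with
    | [], H => rw [shuffles_nil_left]; exact List.nodup_singleton _
    | v::V, [] => rw [shuffles_nil_right]; exact List.nodup_singleton _
    | v::V, h::H =>
      have hV' : ∀ s ∈ V, isVert s = true := fun s hs => hV s (by simp [hs])
      have hH' : ∀ s ∈ H, isHoriz s = true := fun s hs => hH s (by simp [hs])
      rw [shuffles_cons_cons]
      have d1 : ((shuffles V (h::H)).map (fun σ => v :: σ)).Nodup := by
        refine List.Nodup.map (fun a b hab => by simpa using hab) ?_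
        exact ih (V.length + (h::H).length) (by simp at hlen ⊢; omega) V (h::H) rfl hV' hH
      have d2 : ((shuffles (v::V) H).map (fun σ => h :: σ)).Nodup := by
        refine List.Nodup.map (fun a b hab => by simpa using hab) ?_
        exact ih ((v::V).length + H.length) (by simp at hlen ⊢; omega) (v::V) H rfl hV hH'
      refine List.Nodup.append d1 d2 ?_
      intro σ h1 h2
      obtain ⟨τ1, _, e1⟩ := List.mem_map.mp h1
      obtain ⟨τ2, _, e2⟩ := List.mem_map.mp h2
      rw [← e1] at e2
      have he : h = v := by injection e2
      have hv : isVert v = true := hV v (by simp)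
      have hh : isHoriz h = true := hH h (by simp)
      rw [he] at hh
      rw [vert_not_horiz hv] at hh
      exact Bool.false_ne_true hh

lemma fsum_split : ∀ (L : List (List Step)),
    fsum L = ((L.filter (fun σ => decide (Even (peakCount σ)))).length : ℤ)
      - ((L.filter (fun σ => decide (¬ Even (peakCount σ)))).length : ℤ) := by
  intro L
  induction L with
  | nil => simp [fsum]
  | cons σ L ih =>
    rw [fsum_cons, ih, List.filter_cons, List.filter_cons]
    by_cases hσ : Even (peakCount σ)
    · rw [show sgn σ = 1 from Even.neg_one_pow hσ]
      simp [hσ]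
      push_cast
      ring
    · rw [show sgn σ = -1 from Odd.neg_one_pow (Nat.not_even_iff_odd.mp hσ)]
      simp [hσ]
      push_cast
      ring

/-- **Theorem (Conjecture of Albert and Bousquet-Mélou).**
If `V` is a vertical loop with `j` North and `j` South steps and `H` is a horizontal loop
with `i` East and `i` West steps, then the number of shuffles of `V` and `H` with even
peak-count exceeds the number with odd peak-count by exactly `C(i+j, i)`. -/
theorem even_sub_odd_peakCount_loops (i j : ℕ) (V H : List Step)
    (hV : ∀ s ∈ V, isVert s = true)
    (hVu : V.count Step.N = j) (hVd : V.count Step.S = j)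
    (hH : ∀ s ∈ H, isHoriz s = true)
    (hHr : H.count Step.E = i) (hHl : H.count Step.W = i) :
    ({σ : List Step | IsShuffle V H σ ∧ Even (peakCount σ)}.ncard : ℤ)
      - ({σ : List Step | IsShuffle V H σ ∧ ¬ Even (peakCount σ)}.ncard : ℤ)
      = (i + j).choose i := by
  classical
  set L := shuffles V H with hL
  have hmem : ∀ σ, σ ∈ L ↔ IsShuffle V H σ := by
    intro σ
    constructor
    · exact isShuffle_of_mem (V.length + H.length) V H σ rfl hV hH
    · exact mem_of_isShuffle σ V H
  have hnd : L.Nodup := shuffles_nodup (V.length + H.length) V H rfl hV hH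
  have h1 : {σ : List Step | IsShuffle V H σ ∧ Even (peakCount σ)}
      = ↑((L.filter (fun σ => decide (Even (peakCount σ)))).toFinset) := by
    ext σ
    simp [List.mem_filter, hmem σ, and_comm]
  have h2 : {σ : List Step | IsShuffle V H σ ∧ ¬ Even (peakCount σ)}
      = ↑((L.filter (fun σ => decide (¬ Even (peakCount σ)))).toFinset) := by
    ext σ
    simp [List.mem_filter, hmem σ, and_comm]
  rw [h1, h2, Set.ncard_coe_finset, Set.ncard_coe_finset,
      List.toFinset_card_of_nodup (hnd.filter _), List.toFinset_card_of_nodup (hnd.filter _)]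
  rw [← fsum_split L]
  rw [hL, fsum_shuffles (V.length + H.length) V H rfl hV hH]
  rw [hVu, hVd, hHr, hHl, phi_diag]
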